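/- arXiv:2105.03231 — 6 statements merged into one kernel-verified Lean document; each statement's English description precedes it below -/
import Mathlib

section
/- Let K be a field and s, t ∈ K. Define φ₁ : K³ → K³ by φ₁(x, y, z) = (s(y² − t²z²)z, xy(y − sz), xz(y − sz)). Suppose (x, y, z) ∈ K³ satisfies s ≠ 0, x ≠ 0, z ≠ 0, y − sz ≠ 0, and y² − t²z² ≠ 0. Then φ₁(x, y, z) ≠ 0, φ₁(φ₁(x, y, z)) ≠ 0, and in the projective plane ℙ²(K) the points determined by φ₁(φ₁(x, y, z)) and (x, y, z) coincide, i.e. Φ₁ ∘ Φ₁ is the identity at [x : y : z]. -/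
/-- The first HKY switch `Φ₁ : [x : y : z] ↦ [s(y² − t²z²)z : xy(y − sz) : xz(y − sz)]`
in homogeneous coordinates, as a polynomial map on triples. -/
def hkyPhi1 {K : Type*} [Field K] (s t : K) (p : K × K × K) : K × K × K :=
  (s * (p.2.1 ^ 2 - t ^ 2 * p.2.2 ^ 2) * p.2.2,
   p.1 * p.2.1 * (p.2.1 - s * p.2.2),
   p.1 * p.2.2 * (p.2.1 - s * p.2.2))

/-- Away from its singular locus, `Φ₁ ∘ Φ₁` is the identity on the projective
plane `ℙ²(K)`: the vectors `φ₁(x, y, z)` and `φ₁(φ₁(x, y, z))` are nonzero, and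
`φ₁(φ₁(x, y, z))` determines the same projective point as `(x, y, z)`. -/
theorem hkyPhi1_proj_involution {K : Type*} [Field K] (s t : K) (x y z : K)
    (hs : s ≠ 0) (hx : x ≠ 0) (hz : z ≠ 0)
    (h1 : y - s * z ≠ 0) (h2 : y ^ 2 - t ^ 2 * z ^ 2 ≠ 0) :
    ∃ (h : hkyPhi1 s t (x, y, z) ≠ 0)
      (h' : hkyPhi1 s t (hkyPhi1 s t (x, y, z)) ≠ 0)
      (h'' : ((x, y, z) : K × K × K) ≠ 0),
      Projectivization.mk K (hkyPhi1 s t (hkyPhi1 s t (x, y, z))) h' =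
        Projectivization.mk K ((x, y, z) : K × K × K) h'' := by
  have hc : s * x ^ 2 * z * (y - s * z) ^ 3 * (y ^ 2 - t ^ 2 * z ^ 2) ≠ 0 := by
    exact mul_ne_zero (mul_ne_zero (mul_ne_zero (mul_ne_zero hs (pow_ne_zero _ hx)) hz)
      (pow_ne_zero _ h1)) h2
  have h'' : ((x, y, z) : K × K × K) ≠ 0 := by
    intro hcon
    exact hx (congrArg Prod.fst hcon)
  have key : hkyPhi1 s t (hkyPhi1 s t (x, y, z)) =
      (s * x ^ 2 * z * (y - s * z) ^ 3 * (y ^ 2 - t ^ 2 * z ^ 2)) • ((x, y, z) : K × K × K) := by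
    refine Prod.ext ?_ (Prod.ext ?_ ?_) <;> simp [hkyPhi1, smul_eq_mul] <;> ring
  have h' : hkyPhi1 s t (hkyPhi1 s t (x, y, z)) ≠ 0 := by
    rw [key]; exact smul_ne_zero hc h''
  have h : hkyPhi1 s t (x, y, z) ≠ 0 := by
    intro hcon
    exact mul_ne_zero (mul_ne_zero hx hz) h1 (congrArg (fun p => p.2.2) hcon)
  refine ⟨h, h', h'', ?_⟩
  rw [Projectivization.mk_eq_mk_iff]
  exact ⟨Units.mk0 _ hc, key.symm⟩
end

section
/- Let K be a field and s, t ∈ K. Define φ₂ : K³ → K³ by φ₂(x, y, z) = (xy(sx − z), (x² − t²z²)z, yz(sx − z)). Suppose (x, y, z) ∈ K³ satisfies y ≠ 0, z ≠ 0, sx − z ≠ 0, and x² − t²z² ≠ 0. Then φ₂(x, y, z) ≠ 0, φ₂(φ₂(x, y, z)) ≠ 0, and in the projective plane ℙ²(K) the points determined by φ₂(φ₂(x, y, z)) and (x, y, z) coincide, i.e. Φ₂ ∘ Φ₂ is the identity at [x : y : z]. -/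
/-- The second HKY switch `Φ₂ : [x : y : z] ↦ [xy(sx − z) : (x² − t²z²)z : yz(sx − z)]`
in homogeneous coordinates, as a polynomial map on triples. -/
def hkyPhi2 {K : Type*} [Field K] (s t : K) (p : K × K × K) : K × K × K :=
  (p.1 * p.2.1 * (s * p.1 - p.2.2),
   (p.1 ^ 2 - t ^ 2 * p.2.2 ^ 2) * p.2.2,
   p.2.1 * p.2.2 * (s * p.1 - p.2.2))

/-- Away from its singular locus, `Φ₂ ∘ Φ₂` is the identity on the projective
plane `ℙ²(K)`: the vectors `φ₂(x, y, z)` and `φ₂(φ₂(x, y, z))` are nonzero, and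
`φ₂(φ₂(x, y, z))` determines the same projective point as `(x, y, z)`. -/
theorem hkyPhi2_proj_involution {K : Type*} [Field K] (s t : K) (x y z : K)
    (hy : y ≠ 0) (hz : z ≠ 0)
    (h1 : s * x - z ≠ 0) (h2 : x ^ 2 - t ^ 2 * z ^ 2 ≠ 0) :
    ∃ (h : hkyPhi2 s t (x, y, z) ≠ 0)
      (h' : hkyPhi2 s t (hkyPhi2 s t (x, y, z)) ≠ 0)
      (h'' : ((x, y, z) : K × K × K) ≠ 0),
      Projectivization.mk K (hkyPhi2 s t (hkyPhi2 s t (x, y, z))) h' =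
        Projectivization.mk K ((x, y, z) : K × K × K) h'' := by
  set lam : K := y ^ 2 * z * (s * x - z) ^ 3 * (x ^ 2 - t ^ 2 * z ^ 2) with hlam
  have hlam0 : lam ≠ 0 := by
    apply mul_ne_zero (mul_ne_zero (mul_ne_zero (pow_ne_zero _ hy) hz)
      (pow_ne_zero _ h1)) h2
  have key : hkyPhi2 s t (hkyPhi2 s t (x, y, z)) = lam • ((x, y, z) : K × K × K) := by
    simp only [hkyPhi2, Prod.smul_mk, smul_eq_mul, hlam, Prod.mk.injEq]
    refine ⟨by ring, by ring, by ring⟩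
  have h : hkyPhi2 s t (x, y, z) ≠ 0 := by
    intro h0
    have := congrArg (fun p : K × K × K => p.2.2) h0
    simp only [hkyPhi2] at this
    exact (mul_ne_zero (mul_ne_zero hy hz) h1) this
  have h'' : ((x, y, z) : K × K × K) ≠ 0 := by
    intro h0
    have := congrArg (fun p : K × K × K => p.2.2) h0
    exact hz this
  have h' : hkyPhi2 s t (hkyPhi2 s t (x, y, z)) ≠ 0 := by
    rw [key]
    exact smul_ne_zero hlam0 h''
  refine ⟨h, h', h'', ?_⟩
  rw [Projectivization.mk_eq_mk_iff' K _ _ h' h'']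
  exact ⟨lam, key.symm⟩
end

section
/- Let K be a field and s, t ∈ K with t ≠ 0 and t ≠ s. Define φ₁ : K³ → K³ by φ₁(x, y, z) = (s(y² − t²z²)z, xy(y − sz), xz(y − sz)). Then for every x, z ∈ K with x ≠ 0 and z ≠ 0, the vector φ₁(x, tz, z) is nonzero and determines the projective point [0 : t : 1] in ℙ²(K). That is, Φ₁ contracts the line {y = tz} to the base point P₂ = [0 : t : 1]. -/
/-- `Φ₁` contracts the line `{y = tz}` to the base point `P₂ = [0 : t : 1]` in `ℙ²(K)`. -/
theorem hkyPhi1_contracts_y_eq_tz {K : Type*} [Field K] (s t : K)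
    (ht : t ≠ 0) (hts : t ≠ s) :
    ∀ x z : K, x ≠ 0 → z ≠ 0 →
      ∃ (h : hkyPhi1 s t (x, t * z, z) ≠ 0) (h' : ((0, t, 1) : K × K × K) ≠ 0),
        Projectivization.mk K (hkyPhi1 s t (x, t * z, z)) h =
          Projectivization.mk K ((0, t, 1) : K × K × K) h' := by
  intro x z hx hz
  have hne : (t - s) ≠ 0 := sub_ne_zero.mpr hts
  have hval : hkyPhi1 s t (x, t * z, z) = ((t - s) * (x * z ^ 2)) • ((0, t, 1) : K × K × K) := by
    simp only [hkyPhi1, Prod.smul_mk, smul_eq_mul, Prod.mk.injEq]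
    refine ⟨by ring, by ring, by ring⟩
  have h' : ((0, t, 1) : K × K × K) ≠ 0 := by
    simp [Prod.ext_iff]
  have h : hkyPhi1 s t (x, t * z, z) ≠ 0 := by
    rw [hval]
    exact smul_ne_zero (mul_ne_zero hne (mul_ne_zero hx (pow_ne_zero 2 hz))) h'
  refine ⟨h, h', ?_⟩
  rw [Projectivization.mk_eq_mk_iff']
  exact ⟨(t - s) * (x * z ^ 2), hval.symm⟩
end

section
/- Let K be a field and s, t ∈ K with t ≠ 0 and t + s ≠ 0. Define φ₁ : K³ → K³ by φ₁(x, y, z) = (s(y² − t²z²)z, xy(y − sz), xz(y − sz)). Then for every x, z ∈ K with x ≠ 0 and z ≠ 0, the vector φ₁(x, −tz, z) is nonzero and determines the projective point [0 : −t : 1] in ℙ²(K). That is, Φ₁ contracts the line {y = −tz} to the base point P₁ = [0 : −t : 1]. -/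
/-- `Φ₁` contracts the line `{y = −tz}` to the base point `P₁ = [0 : −t : 1]` in `ℙ²(K)`. -/
theorem hkyPhi1_contracts_y_eq_neg_tz {K : Type*} [Field K] (s t : K)
    (ht : t ≠ 0) (hts : t + s ≠ 0) :
    ∀ x z : K, x ≠ 0 → z ≠ 0 →
      ∃ (h : hkyPhi1 s t (x, -t * z, z) ≠ 0) (h' : ((0, -t, 1) : K × K × K) ≠ 0),
        Projectivization.mk K (hkyPhi1 s t (x, -t * z, z)) h =
          Projectivization.mk K ((0, -t, 1) : K × K × K) h' := by
  intro x z hx hz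
  have hc : -x * (t + s) * z ^ 2 ≠ 0 := by
    simp [hx, hts, hz, sub_eq_zero]
  have h : hkyPhi1 s t (x, -t * z, z) ≠ 0 := by
    intro h
    apply hc
    have := congrArg (fun v : K × K × K => v.2.2) h
    simp only [hkyPhi1, Prod.snd_zero] at this
    rw [← this]
    ring
  have h' : ((0, -t, 1) : K × K × K) ≠ 0 := by
    intro h
    exact one_ne_zero (congrArg (fun v : K × K × K => v.2.2) h)
  refine ⟨h, h', ?_⟩
  rw [Projectivization.mk_eq_mk_iff']
  exact ⟨-x * (t + s) * z ^ 2, by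
    simp only [hkyPhi1, Prod.smul_mk, smul_eq_mul, Prod.mk.injEq]
    refine ⟨by ring, by ring, by ring⟩⟩
end

section
/- Let K be a field and s, t ∈ K with t ≠ 0 and st ≠ 1. Define φ₂ : K³ → K³ by φ₂(x, y, z) = (xy(sx − z), (x² − t²z²)z, yz(sx − z)). Then for every y, z ∈ K with y ≠ 0 and z ≠ 0, the vector φ₂(tz, y, z) is nonzero and determines the projective point [t : 0 : 1] in ℙ²(K). That is, Φ₂ contracts the line {x = tz} to the base point P₄ = [t : 0 : 1]. -/
/-- `Φ₂` contracts the line `{x = tz}` to the base point `P₄ = [t : 0 : 1]` in `ℙ²(K)`. -/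
theorem hkyPhi2_contracts_x_eq_tz {K : Type*} [Field K] (s t : K)
    (ht : t ≠ 0) (hst : s * t ≠ 1) :
    ∀ y z : K, y ≠ 0 → z ≠ 0 →
      ∃ (h : hkyPhi2 s t (t * z, y, z) ≠ 0) (h' : ((t, 0, 1) : K × K × K) ≠ 0),
        Projectivization.mk K (hkyPhi2 s t (t * z, y, z)) h =
          Projectivization.mk K ((t, 0, 1) : K × K × K) h' := by
  intro y z hy hz
  have hc : y * z ^ 2 * (s * t - 1) ≠ 0 := by
    apply mul_ne_zero (mul_ne_zero hy (pow_ne_zero _ hz))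
    exact sub_ne_zero_of_ne hst
  have key : hkyPhi2 s t (t * z, y, z)
      = (y * z ^ 2 * (s * t - 1)) • ((t, 0, 1) : K × K × K) := by
    simp only [hkyPhi2, Prod.smul_mk, smul_eq_mul, Prod.mk.injEq]
    refine ⟨by ring, by ring, by ring⟩
  have h' : ((t, 0, 1) : K × K × K) ≠ 0 := by
    intro h
    exact one_ne_zero (congrArg (fun p : K × K × K => p.2.2) h)
  have h : hkyPhi2 s t (t * z, y, z) ≠ 0 := by
    rw [key]
    exact smul_ne_zero hc h'
  refine ⟨h, h', ?_⟩
  rw [Projectivization.mk_eq_mk_iff]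
  exact ⟨Units.mk0 _ hc, key.symm⟩
end

section
/- Let K be a field and s, t ∈ K with t ≠ 0 and st ≠ −1. Define φ₂ : K³ → K³ by φ₂(x, y, z) = (xy(sx − z), (x² − t²z²)z, yz(sx − z)). Then for every y, z ∈ K with y ≠ 0 and z ≠ 0, the vector φ₂(−tz, y, z) is nonzero and determines the projective point [−t : 0 : 1] in ℙ²(K). That is, Φ₂ contracts the line {x = −tz} to the base point P₃ = [−t : 0 : 1]. -/
/-- `Φ₂` contracts the line `{x = −tz}` to the base point `P₃ = [−t : 0 : 1]` in `ℙ²(K)`. -/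
theorem hkyPhi2_contracts_x_eq_neg_tz {K : Type*} [Field K] (s t : K)
    (ht : t ≠ 0) (hst : s * t ≠ -1) :
    ∀ y z : K, y ≠ 0 → z ≠ 0 →
      ∃ (h : hkyPhi2 s t (-t * z, y, z) ≠ 0) (h' : ((-t, 0, 1) : K × K × K) ≠ 0),
        Projectivization.mk K (hkyPhi2 s t (-t * z, y, z)) h =
          Projectivization.mk K ((-t, 0, 1) : K × K × K) h' := by
  intro y z hy hz
  have hst1 : s * t + 1 ≠ 0 := by
    intro h; exact hst (by linear_combination h)
  have hc : -y * z ^ 2 * (s * t + 1) ≠ 0 := by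
    apply mul_ne_zero (mul_ne_zero (neg_ne_zero.mpr hy) (pow_ne_zero 2 hz)) hst1
  have key : hkyPhi2 s t (-t * z, y, z) = (-y * z ^ 2 * (s * t + 1)) • ((-t, 0, 1) : K × K × K) := by
    simp only [hkyPhi2, Prod.smul_mk, smul_eq_mul]
    refine Prod.ext (by simp; ring) (Prod.ext (by simp; left; ring) (by simp; ring))
  have h : hkyPhi2 s t (-t * z, y, z) ≠ 0 := by
    rw [key]
    exact smul_ne_zero hc (by simp)
  have h' : ((-t, 0, 1) : K × K × K) ≠ 0 := by simp
  refine ⟨h, h', ?_⟩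
  rw [Projectivization.mk_eq_mk_iff]
  exact ⟨Units.mk0 _ hc, key.symm⟩
end
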